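/- arXiv:1707.09635 — 4 statements merged into one kernel-verified Lean document; each statement's English description precedes it below -/
import Mathlib

section
/- Let X be a locally connected compact metric space, Y a metric space, and f: X → Y a continuous map. Then the quotient map π̄_f: X → |X|_f with respect to the connecting pseudometric is monotone (each fiber is connected), and the induced map f̄: |X|_f → Y (defined by f = f̄ ∘ π̄_f) is light (each fiber is totally disconnected). Thus f = f̄ ∘ π̄_f is a monotone-light factorization. -/
open ENNReal Set

/-- The connecting pseudometric induced by `f : X → Y`:
`|x−y|_f = inf {diam f(K) : K ⊆ X connected, x ∈ K, y ∈ K}` (`∞` if no such `K`). -/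
noncomputable def connDist {X Y : Type*} [TopologicalSpace X] [PseudoEMetricSpace Y]
    (f : X → Y) (x y : X) : ℝ≥0∞ :=
  ⨅ K : {K : Set X // IsConnected K ∧ x ∈ K ∧ y ∈ K}, EMetric.diam (f '' K.1)

/-!
Monotonicity: local connectedness makes `π̄_f` continuous, so the fiber of `π̄_f` through `a`,
the set of `b` with `|a−b|_f = 0`, is the intersection over `ε > 0` of the closures of the sets
`{b | |a−b|_f < ε}`. Each of these is a union of connected sets through `a`, so the fiber is the
intersection of a nested family of continua, hence connected.

Lightness: fix a preconnected set `t` in a fiber `f̄⁻¹{y}` and `δ > 0`. Being joined by a connected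
set whose `f`-image lies in the `δ`-ball around `y` is a transitive relation on `t`, and it holds
between points of `t` at `|·|_f`-distance `< δ`; by connectedness of `t` it holds between any two
of its points, so their distance is at most `2δ`.
-/

open Filter Topology

theorem ENNReal.exists_pos_two_mul_lt {ε : ℝ≥0∞} (hε : 0 < ε) :
    ∃ δ : ℝ≥0∞, 0 < δ ∧ 2 * δ < ε := by
  obtain ⟨c, hc, hcε⟩ := exists_between hε
  refine ⟨c / 2, ENNReal.half_pos hc.ne', ?_⟩
  rwa [ENNReal.mul_div_cancel two_ne_zero ofNat_ne_top]

theorem isPreconnected_iInter_of_directed_of_isCompact {X ι : Type*} [TopologicalSpace X]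
    [T2Space X] [Nonempty ι] {K : ι → Set X} (hdir : Directed (· ⊇ ·) K)
    (hcpt : ∀ i, IsCompact (K i)) (hconn : ∀ i, IsPreconnected (K i)) :
    IsPreconnected (⋂ i, K i) := by
  obtain ⟨i₀⟩ := ‹Nonempty ι›
  have hC : IsCompact (⋂ i, K i) :=
    (hcpt i₀).of_isClosed_subset (isClosed_iInter fun i => (hcpt i).isClosed) (iInter_subset K i₀)
  rw [isPreconnected_iff_subset_of_fully_disjoint_closed hC.isClosed]
  intro u v hu hv hCuv huv
  obtain ⟨U, V, hU, hV, huU, hvV, hUV⟩ := SeparatedNhds.of_isCompact_isCompact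
    (hC.inter_right hu) (hC.inter_right hv) (huv.mono inter_subset_right inter_subset_right)
  have hCUV : ∀ x ∈ ⋂ i, K i, U ∪ V ∈ 𝓝 x := fun x hx =>
    (hU.union hV).mem_nhds ((hCuv hx).imp (fun h => huU ⟨hx, h⟩) fun h => hvV ⟨hx, h⟩)
  obtain ⟨i, hi⟩ := exists_subset_nhds_of_isCompact hdir hcpt hCUV
  rcases (hconn i).subset_or_subset hU hV hUV hi with hKU | hKV
  · refine Or.inl fun x hx => (hCuv hx).resolve_right fun hxv => ?_
    exact disjoint_left.mp hUV (hKU (mem_iInter.mp hx i)) (hvV ⟨hx, hxv⟩)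
  · refine Or.inr fun x hx => (hCuv hx).resolve_left fun hxu => ?_
    exact disjoint_left.mp hUV (huU ⟨hx, hxu⟩) (hKV (mem_iInter.mp hx i))

section ConnDist

variable {X Y : Type*} [TopologicalSpace X] [PseudoEMetricSpace Y] {f : X → Y}

theorem connDist_le_ediam {K : Set X} {a b : X} (hK : IsConnected K) (ha : a ∈ K) (hb : b ∈ K) :
    connDist f a b ≤ Metric.ediam (f '' K) :=
  iInf_le (fun K : {K : Set X // IsConnected K ∧ a ∈ K ∧ b ∈ K} => Metric.ediam (f '' K.1))
    ⟨K, hK, ha, hb⟩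

theorem exists_isConnected_ediam_lt_of_connDist_lt {a b : X} {ε : ℝ≥0∞}
    (h : connDist f a b < ε) :
    ∃ K : Set X, IsConnected K ∧ a ∈ K ∧ b ∈ K ∧ Metric.ediam (f '' K) < ε := by
  obtain ⟨⟨K, hK, ha, hb⟩, hKε⟩ := iInf_lt_iff.mp h
  exact ⟨K, hK, ha, hb, hKε⟩

theorem exists_isConnected_image_subset_eball_of_connDist_lt {a b : X} {ε : ℝ≥0∞}
    (h : connDist f a b < ε) :
    ∃ K : Set X, IsConnected K ∧ a ∈ K ∧ b ∈ K ∧ f '' K ⊆ Metric.eball (f a) ε := by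
  obtain ⟨K, hK, ha, hb, hKε⟩ := exists_isConnected_ediam_lt_of_connDist_lt h
  refine ⟨K, hK, ha, hb, ?_⟩
  rintro _ ⟨p, hp, rfl⟩
  exact (Metric.edist_le_ediam_of_mem (mem_image_of_mem f hp) (mem_image_of_mem f ha)).trans_lt hKε

theorem isPreconnected_setOf_connDist_lt (a : X) (ε : ℝ≥0∞) :
    IsPreconnected {b | connDist f a b < ε} := by
  refine isPreconnected_of_forall a fun b hb => ?_
  obtain ⟨K, hK, haK, hbK, hKε⟩ := exists_isConnected_ediam_lt_of_connDist_lt hb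
  exact ⟨K, fun p hp => (connDist_le_ediam hK haK hp).trans_lt hKε, haK, hbK, hK.isPreconnected⟩

theorem eventually_connDist_lt [LocallyConnectedSpace X] (hf : Continuous f) (a : X)
    {ε : ℝ≥0∞} (hε : 0 < ε) : ∀ᶠ b in 𝓝 a, connDist f a b < ε := by
  obtain ⟨δ, hδ, hδε⟩ := ENNReal.exists_pos_two_mul_lt hε
  obtain ⟨N, ⟨hNo, haN, hN⟩, hNf⟩ := (LocallyConnectedSpace.open_connected_basis a).mem_iff.mp
    (hf.continuousAt (Metric.eball_mem_nhds (f a) hδ))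
  filter_upwards [hNo.mem_nhds haN] with b hb
  calc connDist f a b ≤ Metric.ediam (f '' N) := connDist_le_ediam hN haN hb
    _ ≤ Metric.ediam (Metric.eball (f a) δ) := Metric.ediam_mono (image_subset_iff.mpr hNf)
    _ ≤ 2 * δ := Metric.ediam_eball_le
    _ < ε := hδε

end ConnDist

section Quotient

variable {X Y Z : Type*} [TopologicalSpace X] [PseudoEMetricSpace Y] {f : X → Y} {π : X → Z}

theorem continuous_of_edist_eq_connDist [LocallyConnectedSpace X] [PseudoEMetricSpace Z]
    (hf : Continuous f) (hdist : ∀ x y : X, edist (π x) (π y) = connDist f x y) :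
    Continuous π := by
  refine continuous_iff_continuousAt.mpr fun a => EMetric.tendsto_nhds.mpr fun ε hε => ?_
  filter_upwards [eventually_connDist_lt hf a hε] with b hb
  rwa [edist_comm, hdist]

theorem preimage_singleton_eq_iInter_closure_setOf_connDist_lt [EMetricSpace Z]
    (hπ : Continuous π) (hdist : ∀ x y : X, edist (π x) (π y) = connDist f x y) (a : X) :
    π ⁻¹' {π a} = ⋂ ε : Ioi (0 : ℝ≥0∞), closure {b | connDist f a b < ε} := by
  have hclosed (ε : ℝ≥0∞) : IsClosed {b | connDist f a b ≤ ε} := by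
    simp_rw [← hdist]
    exact isClosed_le (continuous_const.edist hπ) continuous_const
  ext b
  simp only [mem_preimage, mem_singleton_iff, mem_iInter, Subtype.forall, mem_Ioi]
  refine ⟨fun hb ε hε => subset_closure ?_, fun hb => ?_⟩
  · rw [mem_ofPred_eq, ← hdist, hb, edist_self]
    exact hε
  · have hzero : connDist f a b ≤ 0 := le_of_forall_gt_imp_ge_of_dense fun ε hε =>
      closure_minimal (ofPred_subset_ofPred.mpr fun _ => le_of_lt) (hclosed ε) (hb ε hε)
    rw [← hdist, nonpos_iff_eq_zero, edist_eq_zero] at hzero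
    exact hzero.symm

theorem isConnected_preimage_singleton_of_edist_eq_connDist [CompactSpace X] [T2Space X]
    [LocallyConnectedSpace X] [EMetricSpace Z] (hf : Continuous f)
    (hdist : ∀ x y : X, edist (π x) (π y) = connDist f x y) (a : X) :
    IsConnected (π ⁻¹' {π a}) := by
  refine ⟨⟨a, rfl⟩, ?_⟩
  rw [preimage_singleton_eq_iInter_closure_setOf_connDist_lt
    (continuous_of_edist_eq_connDist hf hdist) hdist]
  have : Nonempty (Ioi (0 : ℝ≥0∞)) := ⟨⟨1, mem_Ioi.mpr zero_lt_one⟩⟩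
  refine isPreconnected_iInter_of_directed_of_isCompact ?_ (fun _ => isClosed_closure.isCompact)
    fun ε => (isPreconnected_setOf_connDist_lt a ε).closure
  exact Monotone.directed_ge fun ε ε' hεε' =>
    closure_mono (ofPred_subset_ofPred.mpr fun _ hb => hb.trans_le hεε')

theorem edist_le_two_mul_of_isPreconnected_of_subset_preimage_singleton [PseudoEMetricSpace Z]
    (hπ : Function.Surjective π) (hdist : ∀ x y : X, edist (π x) (π y) = connDist f x y)
    {g : Z → Y} (hg : ∀ x, g (π x) = f x) {y : Y} {t : Set Z} (hty : t ⊆ g ⁻¹' {y})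
    (ht : IsPreconnected t) {δ : ℝ≥0∞} (hδ : 0 < δ) {z₁ z₂ : Z} (hz₁ : z₁ ∈ t) (hz₂ : z₂ ∈ t) :
    edist z₁ z₂ ≤ 2 * δ := by
  let P (z z' : Z) : Prop := ∀ x, π x = z → ∃ x', π x' = z' ∧
    ∃ K : Set X, IsConnected K ∧ x ∈ K ∧ x' ∈ K ∧ f '' K ⊆ Metric.eball y δ
  have hnear : ∀ z ∈ t, ∀ z', edist z z' < δ → P z z' := by
    rintro z hz z' hzz' x rfl
    obtain ⟨x', rfl⟩ := hπ z'
    obtain ⟨K, hK, hxK, hx'K, hKf⟩ :=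
      exists_isConnected_image_subset_eball_of_connDist_lt ((hdist x x').symm.trans_lt hzz')
    refine ⟨x', rfl, K, hK, hxK, hx'K, ?_⟩
    rwa [← hg x, hty hz] at hKf
  have htrans (z z' z'' : Z) (h : P z z') (h' : P z' z'') : P z z'' := by
    intro x hx
    obtain ⟨x', hx', K, hK, hxK, hx'K, hKf⟩ := h x hx
    obtain ⟨x'', hx'', K', hK', hx'K', hx''K', hK'f⟩ := h' x' hx'
    refine ⟨x'', hx'', K ∪ K', hK.union ⟨x', hx'K, hx'K'⟩ hK', Or.inl hxK, Or.inr hx''K', ?_⟩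
    rw [image_union]
    exact union_subset hKf hK'f
  have hlocal : ∀ z ∈ t, ∀ᶠ z' in 𝓝[t] z, P z z' ∧ P z' z := fun z hz => by
    filter_upwards [inter_mem_nhdsWithin t (Metric.eball_mem_nhds z hδ)] with z' ⟨hz't, hz'⟩
    exact ⟨hnear z hz z' (by rwa [edist_comm]), hnear z' hz't z hz'⟩
  obtain ⟨x₁, rfl⟩ := hπ z₁
  obtain ⟨x₂, rfl, K, hK, hx₁K, hx₂K, hKf⟩ :=
    ht.induction₂' P hlocal (fun z z' z'' _ _ _ => htrans z z' z'') hz₁ hz₂ x₁ rfl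
  calc edist (π x₁) (π x₂) = connDist f x₁ x₂ := hdist x₁ x₂
    _ ≤ Metric.ediam (f '' K) := connDist_le_ediam hK hx₁K hx₂K
    _ ≤ Metric.ediam (Metric.eball y δ) := Metric.ediam_mono hKf
    _ ≤ 2 * δ := Metric.ediam_eball_le

theorem isTotallyDisconnected_preimage_singleton_of_edist_eq_connDist [EMetricSpace Z]
    (hπ : Function.Surjective π) (hdist : ∀ x y : X, edist (π x) (π y) = connDist f x y)
    {g : Z → Y} (hg : ∀ x, g (π x) = f x) (y : Y) : IsTotallyDisconnected (g ⁻¹' {y}) := by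
  intro t hty ht z₁ hz₁ z₂ hz₂
  by_contra hne
  obtain ⟨δ, hδ, hδlt⟩ := ENNReal.exists_pos_two_mul_lt (edist_pos.mpr hne)
  exact (edist_le_two_mul_of_isPreconnected_of_subset_preimage_singleton hπ hdist hg hty ht hδ
    hz₁ hz₂).not_gt hδlt

end Quotient

/-- monotone–light factorization: for a continuous map `f` from a
locally connected compact metric space `X` to a metric space `Y`, the quotient
projection `π̄_f : X → |X|_f` is monotone (fibers are connected), and the induced
map `f̄ : |X|_f → Y` with `f = f̄ ∘ π̄_f` is light (fibers are totally
disconnected).  `|X|_f` is represented by any metric space `Z` together with a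
surjection `π` realizing the connecting pseudometric. -/
theorem monotone_light_factorization {X Y Z : Type*}
    [MetricSpace X] [CompactSpace X] [LocallyConnectedSpace X]
    [MetricSpace Y] [EMetricSpace Z]
    (f : X → Y) (hf : Continuous f)
    (π : X → Z) (hπ : Function.Surjective π)
    (hdist : ∀ x y : X, edist (π x) (π y) = connDist f x y) :
    (∀ z : Z, IsConnected (π ⁻¹' {z})) ∧
      ∀ g : Z → Y, (∀ x : X, g (π x) = f x) →
        ∀ y : Y, IsTotallyDisconnected (g ⁻¹' {y}) := by
  refine ⟨fun z => ?_, fun g hg y =>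
    isTotallyDisconnected_preimage_singleton_of_edist_eq_connDist hπ hdist hg y⟩
  obtain ⟨a, rfl⟩ := hπ z
  exact isConnected_preimage_singleton_of_edist_eq_connDist hf hdist a
end

section
/- Let X be a compact metric space and let ⟨X⟩ denote X equipped with its induced length metric (the distance between x and y being the infimum of lengths of paths in X from x to y, possibly infinite). Then ⟨X⟩ is a complete metric space. -/
open ENNReal Set Filter Topology unitInterval

/-- The induced length metric `⟨x−y⟩` on a metric space: the infimum of lengths
(total variations) of paths from `x` to `y`, with value `∞` when there is no
rectifiable path. -/
noncomputable def lengthDist {X : Type*} [MetricSpace X] (x y : X) : ℝ≥0∞ :=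
  ⨅ γ : Path x y, eVariationOn (fun t => γ t) Set.univ

namespace LengthProof

variable {X : Type*} [MetricSpace X]

/-- Variation of a concatenation of paths is at most the sum of variations. -/
lemma evar_trans_le {x y z : X} (γ : Path x y) (δ : Path y z) :
    eVariationOn (fun t => (γ.trans δ) t) univ ≤
      eVariationOn (fun t => γ t) univ + eVariationOn (fun t => δ t) univ := by
  set h2 : I := ⟨1/2, by norm_num⟩ with hh2
  have hunion : (univ : Set I) = Icc 0 h2 ∪ Icc h2 1 := by
    ext t
    simp only [mem_univ, mem_union, mem_Icc, true_iff]
    rcases le_total t h2 with h | h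
    · exact Or.inl ⟨t.2.1, h⟩
    · exact Or.inr ⟨h, le_one'⟩
  have h0h : (0 : I) ≤ h2 := by
    change (0:ℝ) ≤ (1/2 : ℝ); norm_num
  have hh1 : h2 ≤ (1 : I) := by
    change (1/2 : ℝ) ≤ (1:ℝ); norm_num
  have key : eVariationOn (fun t => (γ.trans δ) t) univ =
      eVariationOn (fun t => (γ.trans δ) t) (Icc 0 h2) +
        eVariationOn (fun t => (γ.trans δ) t) (Icc h2 1) := by
    conv_lhs => rw [hunion]
    exact eVariationOn.union _ (isGreatest_Icc h0h) (isLeast_Icc hh1)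
  rw [key]
  apply add_le_add
  · -- first half
    set φ : I → I := fun t => ⟨min (2 * (t:ℝ)) 1,
      ⟨le_min (mul_nonneg (by norm_num) t.2.1) zero_le_one, min_le_right _ _⟩⟩ with hφ
    have heq : EqOn (fun t => (γ.trans δ) t) ((fun t => γ t) ∘ φ) (Icc 0 h2) := by
      intro t ht
      have ht' : (t : ℝ) ≤ 1/2 := ht.2
      simp only [Function.comp_apply, Path.trans_apply, dif_pos ht']
      congr 1
      apply Subtype.ext
      simp only [hφ]
      exact (min_eq_left (by linarith)).symm
    rw [eVariationOn.eq_of_eqOn heq]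
    refine eVariationOn.comp_le_of_monotoneOn _ φ ?_ (mapsTo_univ _ _)
    intro a _ b _ hab
    exact Subtype.mk_le_mk.2 (min_le_min (by have := Subtype.coe_le_coe.2 hab; linarith) le_rfl)
  · -- second half
    set ψ : I → I := fun t => ⟨max (2 * (t:ℝ) - 1) 0,
      ⟨le_max_right _ _, max_le (by have := t.2.2; linarith) zero_le_one⟩⟩ with hψ
    have heq : EqOn (fun t => (γ.trans δ) t) ((fun t => δ t) ∘ ψ) (Icc h2 1) := by
      intro t ht
      have ht' : (1/2 : ℝ) ≤ t := ht.1
      simp only [Function.comp_apply, Path.trans_apply]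
      split_ifs with h
      · -- t = 1/2
        have hteq : (t : ℝ) = 1/2 := le_antisymm h ht'
        have e2 : ψ t = (0 : I) := Subtype.ext (by simp [hψ, hteq])
        rw [e2, Path.source]
        convert γ.target using 2
        exact Subtype.ext (by push_cast; rw [hteq]; norm_num)
      · have hgt : (1/2 : ℝ) < t := lt_of_not_ge h
        congr 1
        apply Subtype.ext
        simp only [hψ]
        exact (max_eq_left (by linarith)).symm
    rw [eVariationOn.eq_of_eqOn heq]
    refine eVariationOn.comp_le_of_monotoneOn _ ψ ?_ (mapsTo_univ _ _)
    intro a _ b _ hab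
    exact Subtype.mk_le_mk.2 (max_le_max (by have := Subtype.coe_le_coe.2 hab; linarith) le_rfl)

/-- Finite concatenation of a sequence of paths. -/
noncomputable def catPath (p : ℕ → X) (γ : ∀ n, Path (p n) (p (n + 1))) :
    (m : ℕ) → Path (p 0) (p m)
  | 0 => Path.refl (p 0)
  | (m + 1) => (γ 0).trans (catPath (fun i => p (i + 1)) (fun n => γ (n + 1)) m)

lemma catPath_edist (p : ℕ → X) (γ : ∀ n, Path (p n) (p (n + 1))) (m : ℕ) :
    ∀ t : I, edist (catPath p γ m t) (catPath p γ (m + 1) t) ≤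
      eVariationOn (fun s => γ m s) univ := by
  induction m generalizing p γ with
  | zero =>
    intro t
    simp only [catPath, Path.trans_apply]
    split_ifs with h
    · rw [show (Path.refl (p 0)) t = γ 0 0 from by rw [Path.source]; rfl]
      exact eVariationOn.edist_le _ (mem_univ _) (mem_univ _)
    · rw [show (Path.refl (p 0)) t = γ 0 0 from by rw [Path.source]; rfl]
      rw [show ∀ s : I, (Path.refl (p (0 + 1))) s = γ 0 1 from fun s => by rw [Path.target]; rfl]
      exact eVariationOn.edist_le _ (mem_univ _) (mem_univ _)
  | succ m ih =>
    intro t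
    rw [show catPath p γ (m + 1) = (γ 0).trans (catPath (fun i => p (i + 1)) (fun n => γ (n + 1)) m) from rfl]
    rw [show catPath p γ (m + 1 + 1) = (γ 0).trans (catPath (fun i => p (i + 1)) (fun n => γ (n + 1)) (m + 1)) from rfl]
    rw [Path.trans_apply, Path.trans_apply]
    split_ifs with h
    · simp
    · exact ih (fun i => p (i + 1)) (fun n => γ (n + 1)) _

lemma catPath_evar (p : ℕ → X) (γ : ∀ n, Path (p n) (p (n + 1))) (m : ℕ) :
    eVariationOn (fun t => catPath p γ m t) univ ≤
      ∑ i ∈ Finset.range m, eVariationOn (fun t => γ i t) univ := by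
  induction m generalizing p γ with
  | zero =>
    have h0 : eVariationOn (fun t : I => catPath p γ 0 t) univ = 0 := by
      apply eVariationOn.constant_on
      rintro a ⟨s, -, rfl⟩ b ⟨u, -, rfl⟩
      rfl
    simp [h0]
  | succ m ih =>
    refine le_trans (le_of_eq (eVariationOn.eq_of_eqOn (fun t _ => ?_))) <|
      le_trans (evar_trans_le (γ 0) (catPath (fun i => p (i + 1)) (fun n => γ (n + 1)) m)) ?_
    · show catPath p γ (m + 1) t = _
      simp only [catPath]
    · rw [Finset.sum_range_succ', add_comm]
      gcongr
      exact ih (fun i => p (i + 1)) (fun n => γ (n + 1))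

lemma exists_tail_path [CompleteSpace X] (p : ℕ → X) (x : X)
    (hx : Filter.Tendsto p Filter.atTop (nhds x))
    (γ : ∀ n, Path (p n) (p (n + 1))) (C : ℕ → NNReal) (hsum : Summable C)
    (hC : ∀ n, eVariationOn (fun t => γ n t) univ ≤ (C n : ℝ≥0∞)) :
    ∃ Γ : Path (p 0) x, eVariationOn (fun t => Γ t) univ ≤ ∑' n, (C n : ℝ≥0∞) := by
  set G : ℕ → C(I, X) := fun m => (catPath p γ m).toContinuousMap with hG
  have hGapp : ∀ m t, G m t = catPath p γ m t := fun m t => rfl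
  have hd : ∀ m, dist (G m) (G (m + 1)) ≤ ((C m : NNReal) : ℝ) := by
    intro m
    rw [ContinuousMap.dist_le (C m).coe_nonneg]
    intro t
    have h1 : edist (G m t) (G (m + 1) t) ≤ (C m : ℝ≥0∞) :=
      le_trans (catPath_edist p γ m t) (hC m)
    rw [edist_le_coe] at h1
    exact dist_le_coe.mpr h1
  have hcauchy : CauchySeq G :=
    cauchySeq_of_dist_le_of_summable _ hd (NNReal.summable_coe.mpr hsum)
  obtain ⟨Γl, hΓl⟩ := cauchySeq_tendsto_of_complete hcauchy
  have hpt : ∀ t : I, Filter.Tendsto (fun m => (G m) t) Filter.atTop (nhds (Γl t)) :=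
    fun t => ((continuous_eval_const t).tendsto Γl).comp hΓl
  have h0 : Γl 0 = p 0 := by
    refine tendsto_nhds_unique (hpt 0) ?_
    have : (fun m => G m 0) = fun _ => p 0 := by
      funext m; rw [hGapp]; exact (catPath p γ m).source
    rw [this]
    exact tendsto_const_nhds
  have h1 : Γl 1 = x := by
    refine tendsto_nhds_unique (hpt 1) ?_
    have : (fun m => G m 1) = p := by
      funext m; rw [hGapp]; exact (catPath p γ m).target
    rw [this]
    exact hx
  refine ⟨⟨Γl, h0, h1⟩, ?_⟩
  by_contra hlt
  push_neg at hlt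
  have hev := eVariationOn.lowerSemicontinuous_aux
    (F := fun m => fun t : I => G m t) (p := Filter.atTop)
    (f := fun t : I => Γl t) (s := (univ : Set I)) (fun t _ => hpt t) hlt
  obtain ⟨m, hm⟩ := hev.exists
  have hbound : eVariationOn (fun t : I => G m t) univ ≤ ∑' n, (C n : ℝ≥0∞) := by
    refine le_trans (catPath_evar p γ m) ?_
    refine le_trans (Finset.sum_le_sum fun i _ => hC i) ?_
    exact ENNReal.sum_le_tsum _
  exact absurd hbound (not_le.mpr hm)

end LengthProof

/-- if `X` is a compact metric space, then `⟨X⟩`, i.e. `X` equipped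
with its induced length metric, is complete: every Cauchy sequence for the
length metric converges in the length metric. -/
theorem length_metric_complete {X : Type*} [MetricSpace X] [CompactSpace X] :
    ∀ u : ℕ → X,
      (∀ ε : ℝ≥0∞, 0 < ε → ∃ N : ℕ, ∀ m n : ℕ, N ≤ m → N ≤ n →
        lengthDist (u m) (u n) < ε) →
      ∃ x : X, ∀ ε : ℝ≥0∞, 0 < ε → ∃ N : ℕ, ∀ n : ℕ, N ≤ n →
        lengthDist (u n) x < ε := by
  intro u hu
  classical
  have two_inv_lt : (2 : ℝ≥0∞)⁻¹ < 1 := by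
    rw [ENNReal.inv_lt_one]; exact one_lt_two
  have hpos : ∀ k : ℕ, (0 : ℝ≥0∞) < 2⁻¹ ^ k := fun k =>
    ENNReal.pow_pos (ENNReal.inv_pos.mpr ENNReal.ofNat_ne_top) k
  choose N₀ hN₀ using fun k => hu (2⁻¹ ^ k) (hpos k)
  set N : ℕ → ℕ := fun k => (Finset.range (k + 1)).sup N₀ with hN
  have hNmono : Monotone N := fun a b hab =>
    Finset.sup_mono (Finset.range_subset_range.mpr (by omega))
  have hNk : ∀ k, N₀ k ≤ N k := fun k => Finset.le_sup (Finset.self_mem_range_succ k)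
  set p : ℕ → X := fun k => u (N k) with hp
  have hpd : ∀ k, lengthDist (p k) (p (k + 1)) < 2⁻¹ ^ k := fun k =>
    hN₀ k _ _ (hNk k) (le_trans (hNk k) (hNmono (Nat.le_succ k)))
  have hγex : ∀ k, ∃ γ : Path (p k) (p (k + 1)),
      eVariationOn (fun t => γ t) Set.univ < 2⁻¹ ^ k := by
    intro k
    have := hpd k
    rw [lengthDist, iInf_lt_iff] at this
    exact this
  choose γ hγ using hγex
  have hCoe : ∀ k : ℕ, (((2 : NNReal)⁻¹ ^ k : NNReal) : ℝ≥0∞) = 2⁻¹ ^ k := by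
    intro k
    rw [ENNReal.coe_pow, ENNReal.coe_inv two_ne_zero]
    norm_num
  have hsumC : Summable (fun k : ℕ => (2 : NNReal)⁻¹ ^ k) :=
    NNReal.summable_geometric (by rw [← NNReal.coe_lt_coe]; norm_num)
  have hgeo : ∑' k : ℕ, (2 : ℝ≥0∞)⁻¹ ^ k = 2 := by
    rw [ENNReal.tsum_geometric, ENNReal.one_sub_inv_two, inv_inv]
  have hedist : ∀ k, edist (p k) (p (k + 1)) ≤ 2⁻¹ ^ k := by
    intro k
    have h := eVariationOn.edist_le (fun t => γ k t) (mem_univ (0 : I)) (mem_univ (1 : I))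
    simp only [Path.source, Path.target] at h
    exact le_trans h (hγ k).le
  have hcp : CauchySeq p := by
    refine cauchySeq_of_edist_le_of_tsum_ne_top _ hedist ?_
    rw [hgeo]
    exact ENNReal.ofNat_ne_top
  obtain ⟨x, hx⟩ := cauchySeq_tendsto_of_complete hcp
  refine ⟨x, ?_⟩
  intro ε hε
  have htend : Filter.Tendsto (fun k : ℕ => (3 : ℝ≥0∞) * 2⁻¹ ^ k) Filter.atTop (nhds 0) := by
    have h3 := ENNReal.Tendsto.const_mul
      (ENNReal.tendsto_pow_atTop_nhds_zero_of_lt_one two_inv_lt)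
      (Or.inr (by norm_num : (3 : ℝ≥0∞) ≠ ⊤))
    simpa using h3
  obtain ⟨k, hk⟩ := (htend.eventually (gt_mem_nhds hε)).exists
  -- tail path from p k to x
  have hx' : Filter.Tendsto (fun i => p (k + i)) Filter.atTop (nhds x) := by
    refine hx.comp ?_
    exact Filter.tendsto_atTop_atTop.2 fun b => ⟨b, fun a ha => le_trans ha (Nat.le_add_left a k)⟩
  have hsumC' : Summable (fun i : ℕ => (2 : NNReal)⁻¹ ^ (k + i)) := by
    simpa [pow_add] using hsumC.mul_left ((2 : NNReal)⁻¹ ^ k)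
  have hC' : ∀ i : ℕ, eVariationOn (fun t => (γ (k + i)) t) Set.univ ≤
      (((2 : NNReal)⁻¹ ^ (k + i) : NNReal) : ℝ≥0∞) := fun i => by
    rw [hCoe]; exact (hγ (k + i)).le
  obtain ⟨Γ, hΓ⟩ := LengthProof.exists_tail_path (fun i => p (k + i)) x hx'
    (fun i => γ (k + i)) (fun i => (2 : NNReal)⁻¹ ^ (k + i)) hsumC' hC'
  have htail : ∑' i : ℕ, (((2 : NNReal)⁻¹ ^ (k + i) : NNReal) : ℝ≥0∞) = 2⁻¹ ^ k * 2 := by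
    have h1 : ∀ i : ℕ, (((2 : NNReal)⁻¹ ^ (k + i) : NNReal) : ℝ≥0∞) =
        (2 : ℝ≥0∞)⁻¹ ^ k * (2 : ℝ≥0∞)⁻¹ ^ i := by
      intro i; rw [hCoe, pow_add]
    rw [tsum_congr h1, ENNReal.tsum_mul_left, hgeo]
  refine ⟨N k, fun n hn => ?_⟩
  have h1 : lengthDist (u n) (p k) < 2⁻¹ ^ k :=
    hN₀ k n (N k) (le_trans (hNk k) hn) (hNk k)
  rw [lengthDist, iInf_lt_iff] at h1
  obtain ⟨α, hα⟩ := h1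
  have hle : lengthDist (u n) x ≤ eVariationOn (fun t => α t) Set.univ +
      eVariationOn (fun t => Γ t) Set.univ :=
    le_trans (iInf_le _ (α.trans Γ)) (LengthProof.evar_trans_le α Γ)
  have : lengthDist (u n) x ≤ 3 * 2⁻¹ ^ k := by
    refine le_trans hle ?_
    calc eVariationOn (fun t => α t) Set.univ + eVariationOn (fun t => Γ t) Set.univ
        ≤ 2⁻¹ ^ k + 2⁻¹ ^ k * 2 := add_le_add hα.le (le_trans hΓ (le_of_eq htail))
      _ = 3 * 2⁻¹ ^ k := by ring
  exact lt_of_le_of_lt this hk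
end

section
/- Let X and Y be metric spaces, A ⊆ X, and f: A → Y a short (1-Lipschitz) map. Assume Y is compact and that for every finite set F ⊆ X there exists a short map F → Y agreeing with f on F ∩ A. Then there exists a short map X → Y agreeing with f on A. -/
open Set

/-- let `X`, `Y` be metric spaces, `A ⊆ X` and `f` a short
(1-Lipschitz) map on `A`.  If `Y` is compact and every finite subset `F ⊆ X`
admits a short map to `Y` agreeing with `f` on `F ∩ A`, then there is a short
map `X → Y` agreeing with `f` on `A`. -/
theorem short_map_extension {X Y : Type*} [MetricSpace X] [MetricSpace Y]
    [CompactSpace Y] (A : Set X) (f : X → Y)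
    (hf : ∀ a ∈ A, ∀ b ∈ A, dist (f a) (f b) ≤ dist a b)
    (hfin : ∀ F : Finset X, ∃ g : X → Y,
      (∀ x ∈ F, ∀ y ∈ F, dist (g x) (g y) ≤ dist x y) ∧
      (∀ x ∈ F, x ∈ A → g x = f x)) :
    ∃ g : X → Y, LipschitzWith 1 g ∧ ∀ a ∈ A, g a = f a := by
  classical
  -- The set of functions satisfying the constraints coming from the finite set `F`.
  set S : Finset X → Set (X → Y) := fun F =>
    {g | (∀ x ∈ F, ∀ y ∈ F, dist (g x) (g y) ≤ dist x y) ∧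
         (∀ x ∈ F, x ∈ A → g x = f x)} with hS
  have hclosed : ∀ F, IsClosed (S F) := by
    intro F
    have hSeq : S F = (⋂ x ∈ F, ⋂ y ∈ F, {g : X → Y | dist (g x) (g y) ≤ dist x y}) ∩
        ⋂ x ∈ F, {g : X → Y | x ∈ A → g x = f x} := by
      ext g; simp [hS]
    rw [hSeq]
    apply IsClosed.inter
    · refine isClosed_biInter fun x _ => isClosed_biInter fun y _ => ?_
      exact isClosed_le (Continuous.dist (continuous_apply x) (continuous_apply y))
        continuous_const
    · refine isClosed_biInter fun x _ => ?_
      by_cases hx : x ∈ A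
      · simpa [hx] using isClosed_eq (continuous_apply x) continuous_const
      · simp [hx]
  have hne : ∀ F, (S F).Nonempty := by
    intro F
    obtain ⟨g, hg1, hg2⟩ := hfin F
    exact ⟨g, hg1, hg2⟩
  have hdir : Directed (· ⊇ ·) S := by
    intro F G
    refine ⟨F ∪ G, fun g hg => ⟨fun x hx y hy => hg.1 x (Finset.mem_union_left _ hx)
        y (Finset.mem_union_left _ hy), fun x hx => hg.2 x (Finset.mem_union_left _ hx)⟩,
      fun g hg => ⟨fun x hx y hy => hg.1 x (Finset.mem_union_right _ hx)
        y (Finset.mem_union_right _ hy), fun x hx => hg.2 x (Finset.mem_union_right _ hx)⟩⟩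
  have hcpt : ∀ F, IsCompact (S F) := fun F => (hclosed F).isCompact
  obtain ⟨g, hg⟩ := IsCompact.nonempty_iInter_of_directed_nonempty_isCompact_isClosed
    S hdir hne hcpt hclosed
  refine ⟨g, ?_, ?_⟩
  · refine LipschitzWith.of_dist_le_mul fun x y => ?_
    have := (mem_iInter.1 hg ({x, y} : Finset X)).1 x (by simp) y (by simp)
    simpa using this
  · intro a ha
    exact (mem_iInter.1 hg ({a} : Finset X)).2 a (by simp) ha
end

section
/- Let Y be a metric space and s: 𝔻 → Y a metric minimizing disc (a continuous map from the closed disc such that any majorization ⟨𝔻⟩_s → ⟨𝔻⟩_{s'} to another map s' spanning the same boundary curve is an isometry). Then s has no bubbles: for every point p ∈ Y, every connected component of 𝔻 ∖ s⁻¹({p}) contains a point of ∂𝔻. -/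
open Set ENNReal

/-- The length pseudometric induced by `f : X → Y`:
`⟨x−y⟩_f = inf {length (f ∘ γ) : γ a path in X from x to y}`. -/
noncomputable def lenPD {X Y : Type*} [TopologicalSpace X] [PseudoEMetricSpace Y]
    (f : X → Y) (x y : X) : ℝ≥0∞ :=
  ⨅ γ : Path x y, eVariationOn (fun t => f (γ t)) Set.univ

/-- The closed unit disc `𝔻`. -/
abbrev Disc : Type := (Metric.closedBall (0 : ℂ) 1 : Set ℂ)

/-- Membership in the boundary circle `∂𝔻`. -/
def OnBdry (x : Disc) : Prop := ‖x.1‖ = 1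

/-- `s : 𝔻 → Y` is a metric minimizing disc: any majorization
`μ : ⟨𝔻⟩_s → ⟨𝔻⟩_{s'}` (a short map with `δ_{s'} = μ ∘ δ_s`) onto the induced
length space of another map `s'` spanning the same boundary curve is an
isometry.  A map `μ` between the quotient length spaces is encoded by a map
`T : 𝔻 → 𝔻` on representatives: `μ` is short iff `⟨T x − T y⟩_{s'} ≤ ⟨x − y⟩_s`
for all `x, y`, it commutes with the boundary projections iff
`⟨T u − u⟩_{s'} = 0` on `∂𝔻`, and it is an isometry iff it preserves the
induced length pseudodistances. -/
def IsMetricMinimizingDisc {Y : Type*} [MetricSpace Y] (s : Disc → Y) : Prop :=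
  Continuous s ∧
  ∀ (s' : Disc → Y) (T : Disc → Disc), Continuous s' →
    (∀ u : Disc, OnBdry u → s' u = s u) →
    (∀ u : Disc, OnBdry u → lenPD s' (T u) u = 0) →
    (∀ x y : Disc, lenPD s' (T x) (T y) ≤ lenPD s x y) →
    ∀ x y : Disc, lenPD s' (T x) (T y) = lenPD s x y

/-! If a component `C` of `𝔻 ∖ s⁻¹({p})` missed `∂𝔻`, collapsing `C` to `p` would give a
continuous map `s'` with the same boundary values: since `s = p` on the frontier of `C`, every
path that enters `C` can be rerouted through `p` in the image without gaining length, so the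
identity of `𝔻` is a majorization `⟨𝔻⟩_s → ⟨𝔻⟩_{s'}`. It is not an isometry, because `⟨𝔻⟩_{s'}`
identifies all of `C` to a point whereas `s` is not constant on `C` (it is `≠ p` on `C` and `= p`
on the nonempty frontier). -/

theorem IsPreconnected.inter_frontier_nonempty {X : Type*} [TopologicalSpace X] {s t : Set X}
    (hs : IsPreconnected s) (hst : (s ∩ t).Nonempty) (hst' : (s \ t).Nonempty) :
    (s ∩ frontier t).Nonempty := by
  by_contra h
  have hcover : s ⊆ interior t ∪ (closure t)ᶜ := fun z hz => by
    by_contra hz'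
    simp only [mem_union, mem_compl_iff, not_or, not_not] at hz'
    exact h ⟨z, hz, hz'.2, hz'.1⟩
  obtain ⟨z, hzs, hzt⟩ := hst
  obtain ⟨w, hws, hwt⟩ := hst'
  have hz : z ∈ interior t := (hcover hzs).resolve_right (not_not.2 (subset_closure hzt))
  have hw : w ∈ (closure t)ᶜ := (hcover hws).resolve_left fun h => hwt (interior_subset h)
  obtain ⟨y, -, hyi, hyc⟩ := hs _ _ isOpen_interior isClosed_closure.isOpen_compl hcover
    ⟨z, hzs, hz⟩ ⟨w, hws, hw⟩
  exact hyc (interior_subset_closure hyi)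

theorem eVariationOn.le_of_edist_le {α E F : Type*} [LinearOrder α] [PseudoEMetricSpace E]
    [PseudoEMetricSpace F] {f : α → E} {g : α → F} {s : Set α}
    (h : ∀ a ∈ s, ∀ b ∈ s, a ≤ b → edist (g b) (g a) ≤ eVariationOn f (s ∩ Icc a b)) :
    eVariationOn g s ≤ eVariationOn f s := by
  refine iSup_le fun ⟨n, u, hu, us⟩ => ?_
  calc ∑ i ∈ Finset.range n, edist (g (u (i + 1))) (g (u i))
      ≤ ∑ i ∈ Finset.range n, eVariationOn f (s ∩ Icc (u i) (u (i + 1))) :=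
        Finset.sum_le_sum fun i _ => h _ (us i) _ (us (i + 1)) (hu i.le_succ)
    _ = eVariationOn f (s ∩ Icc (u 0) (u n)) := eVariationOn.sum f hu fun i _ _ => us i
    _ ≤ eVariationOn f s := eVariationOn.mono f inter_subset_left

section Collapse

variable {α X Y : Type*} [ConditionallyCompleteLinearOrder α] [TopologicalSpace α]
  [OrderTopology α] [DenselyOrdered α] [TopologicalSpace X] [PseudoEMetricSpace Y]
  {s : X → Y} {p : Y} {C : Set X}

theorem Continuous.exists_mem_Icc_mem_frontier {γ : α → X} (hγ : Continuous γ) {a b : α}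
    (hab : a ≤ b) (h : ¬(γ a ∈ C ↔ γ b ∈ C)) : ∃ r ∈ Icc a b, γ r ∈ frontier C := by
  have hI : IsPreconnected (γ '' Icc a b) := isPreconnected_Icc.image γ hγ.continuousOn
  have ha : γ a ∈ γ '' Icc a b := mem_image_of_mem γ (left_mem_Icc.2 hab)
  have hb : γ b ∈ γ '' Icc a b := mem_image_of_mem γ (right_mem_Icc.2 hab)
  obtain ⟨-, ⟨r, hr, rfl⟩, hrC⟩ : (γ '' Icc a b ∩ frontier C).Nonempty := by
    by_cases haC : γ a ∈ C
    · exact hI.inter_frontier_nonempty ⟨_, ha, haC⟩ ⟨_, hb, by tauto⟩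
    · exact hI.inter_frontier_nonempty ⟨_, hb, by tauto⟩ ⟨_, ha, haC⟩
  exact ⟨r, hr, hrC⟩

theorem eVariationOn_piecewise_const_comp_le [DecidablePred (· ∈ C)]
    (hC : ∀ z ∈ frontier C, s z = p) {γ : α → X} (hγ : Continuous γ) :
    eVariationOn (C.piecewise (fun _ => p) s ∘ γ) univ ≤ eVariationOn (s ∘ γ) univ := by
  refine eVariationOn.le_of_edist_le fun a _ b _ hab => ?_
  have hmem {t : α} (ht : t ∈ Icc a b) : t ∈ univ ∩ Icc a b := ⟨mem_univ t, ht⟩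
  have ha := hmem (left_mem_Icc.2 hab)
  have hb := hmem (right_mem_Icc.2 hab)
  by_cases hiff : γ a ∈ C ↔ γ b ∈ C
  · by_cases haC : γ a ∈ C
    · simp [piecewise_eq_of_mem _ _ _ haC, piecewise_eq_of_mem _ _ _ (hiff.1 haC)]
    · simp only [Function.comp_apply, piecewise_eq_of_notMem _ _ _ haC,
        piecewise_eq_of_notMem _ _ _ (mt hiff.2 haC)]
      exact eVariationOn.edist_le _ hb ha
  · obtain ⟨r, hr, hrC⟩ := hγ.exists_mem_Icc_mem_frontier hab hiff
    have hrp : (s ∘ γ) r = p := hC _ hrC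
    by_cases haC : γ a ∈ C
    · have hbC : γ b ∉ C := by tauto
      simp only [Function.comp_apply, piecewise_eq_of_mem _ _ _ haC,
        piecewise_eq_of_notMem _ _ _ hbC, ← hrp]
      exact eVariationOn.edist_le _ hb (hmem hr)
    · have hbC : γ b ∈ C := by tauto
      simp only [Function.comp_apply, piecewise_eq_of_notMem _ _ _ haC,
        piecewise_eq_of_mem _ _ _ hbC, ← hrp]
      exact eVariationOn.edist_le _ (hmem hr) ha

end Collapse

section LengthPseudometric

variable {X Y : Type*} [TopologicalSpace X] [PseudoEMetricSpace Y]

theorem lenPD_eq_zero_of_joinedIn {f : X → Y} {S : Set X} {x y : X} (hxy : JoinedIn S x y)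
    (hf : (f '' S).Subsingleton) : lenPD f x y = 0 := by
  obtain ⟨γ, hγ⟩ := hxy
  refine nonpos_iff_eq_zero.1 ((iInf_le _ γ).trans_eq (eVariationOn.constant_on ?_))
  rintro - ⟨t, -, rfl⟩ - ⟨t', -, rfl⟩
  exact hf (mem_image_of_mem f (hγ t)) (mem_image_of_mem f (hγ t'))

theorem lenPD_self (f : X → Y) (x : X) : lenPD f x x = 0 :=
  lenPD_eq_zero_of_joinedIn (JoinedIn.refl (mem_singleton x)) (subsingleton_singleton.image f)

theorem edist_le_lenPD (f : X → Y) (x y : X) : edist (f x) (f y) ≤ lenPD f x y :=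
  le_iInf fun γ => by
    simpa only [γ.source, γ.target] using
      eVariationOn.edist_le (fun t => f (γ t)) (mem_univ 0) (mem_univ 1)

theorem lenPD_piecewise_const_le {s : X → Y} {p : Y} {C : Set X} [DecidablePred (· ∈ C)]
    (hC : ∀ z ∈ frontier C, s z = p) (x y : X) :
    lenPD (C.piecewise (fun _ => p) s) x y ≤ lenPD s x y :=
  iInf_mono fun γ => eVariationOn_piecewise_const_comp_le hC γ.continuous

end LengthPseudometric

instance : LocallyPathConnectedSpace Disc := (convex_closedBall (0 : ℂ) 1).locallyPathConnectedSpace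

instance : ConnectedSpace Disc :=
  isConnected_iff_connectedSpace.1 <|
    (convex_closedBall (0 : ℂ) 1).isConnected ⟨0, Metric.mem_closedBall_self zero_le_one⟩

theorem IsOpen.frontier_connectedComponentIn_subset_compl {X : Type*} [TopologicalSpace X]
    [LocallyConnectedSpace X] {U : Set X} (hU : IsOpen U) (x : X) :
    frontier (connectedComponentIn U x) ⊆ Uᶜ := by
  intro z hz hzU
  rw [hU.connectedComponentIn.frontier_eq] at hz
  obtain ⟨w, hwz, hwx⟩ := mem_closure_iff.1 hz.1 _ hU.connectedComponentIn
    (mem_connectedComponentIn hzU)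
  refine hz.2 ?_
  rw [connectedComponentIn_eq hwx, ← connectedComponentIn_eq hwz]
  exact mem_connectedComponentIn hzU

theorem IsMetricMinimizingDisc.apply_eq_of_joinedIn {Y : Type*} [MetricSpace Y] {s : Disc → Y}
    (hs : IsMetricMinimizingDisc s) {p : Y} {C : Set Disc} (hC : ∀ z ∈ frontier C, s z = p)
    (hCbdry : ∀ u ∈ C, ¬OnBdry u) {x y : Disc} (hxy : JoinedIn C x y) : s x = s y := by
  classical
  set s' := C.piecewise (fun _ => p) s
  have hs' : Continuous s' := continuous_const.piecewise (fun z hz => (hC z hz).symm) hs.1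
  have hbdry (u : Disc) (hu : OnBdry u) : s' u = s u :=
    piecewise_eq_of_notMem _ _ _ fun huC => hCbdry u huC hu
  have hiso := hs.2 s' id hs' hbdry (fun u _ => lenPD_self s' u)
    (lenPD_piecewise_const_le hC) x y
  have hcollapsed : lenPD s' x y = 0 := lenPD_eq_zero_of_joinedIn hxy <| by
    rintro - ⟨a, ha, rfl⟩ - ⟨b, hb, rfl⟩
    simp only [s', piecewise_eq_of_mem _ _ _ ha, piecewise_eq_of_mem _ _ _ hb]
  rw [id, id, hcollapsed] at hiso
  exact edist_eq_zero.1 (nonpos_iff_eq_zero.1 (hiso ▸ edist_le_lenPD s x y))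

/-- a metric minimizing disc `s : 𝔻 → Y` has no bubbles: for every
point `p ∈ Y`, every connected component of `𝔻 ∖ s⁻¹({p})` contains a point of
the boundary circle `∂𝔻`. -/
theorem metric_minimizing_disc_no_bubbles {Y : Type*} [MetricSpace Y]
    (s : Disc → Y) (hs : IsMetricMinimizingDisc s) :
    ∀ p : Y, ∀ x : Disc, s x ≠ p →
      ∃ u ∈ connectedComponentIn {z : Disc | s z ≠ p} x, OnBdry u := by
  intro p x hx
  by_contra! hCbdry
  set U : Set Disc := {z | s z ≠ p}
  set C := connectedComponentIn U x
  have hxU : x ∈ U := hx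
  have hU : IsOpen U := isOpen_ne_fun hs.1 continuous_const
  have hC : ∀ z ∈ frontier C, s z = p := fun z hz =>
    not_not.1 (hU.frontier_connectedComponentIn_subset_compl x hz)
  have hCpath : IsPathConnected C := hU.connectedComponentIn.isConnected_iff_isPathConnected.1
    (isConnected_connectedComponentIn_iff.2 hxU)
  have hconst : closure C ⊆ s ⁻¹' {s x} :=
    (isClosed_singleton.preimage hs.1).closure_subset_iff.2 fun y hy =>
      hs.apply_eq_of_joinedIn hC hCbdry (hCpath.joinedIn y hy x (mem_connectedComponentIn hxU))
  have hone : (⟨1, by simp⟩ : Disc) ∉ C := fun h => hCbdry _ h (by simp [OnBdry])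
  obtain ⟨z, hz⟩ := nonempty_frontier_iff.2
    ⟨⟨x, mem_connectedComponentIn hxU⟩, (ne_univ_iff_exists_notMem C).2 ⟨_, hone⟩⟩
  exact hx ((hconst (frontier_subset_closure hz)).symm.trans (hC z hz))
end
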